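/- The total number of connections in LogLog-DenseNet of depth L is at most 1.5·L·log2 log2 L + o(L log log L). -/

import Mathlib

/-- Key set of the segment `[s,t]`: `{s} ∪ {t - kδ : t - kδ ≥ s}` with `δ = ⌊√(t-s+1)⌋`. -/
def keySet (s t : ℤ) : Finset ℤ :=
  insert s (((Finset.range (t - s + 1).toNat).image
    fun k : ℕ => t - (k : ℤ) * (Nat.sqrt (t - s + 1).toNat : ℤ)).filter (s ≤ ·))

def consecKeys (s t a b : ℤ) : Prop :=
  a ∈ keySet s t ∧ b ∈ keySet s t ∧ a < b ∧ ∀ c ∈ keySet s t, ¬(a < c ∧ c < b)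

inductive Seg (L : ℕ) : ℤ → ℤ → Prop where
  | root : Seg L 0 L
  | child (s t a b : ℤ) : Seg L s t → 3 ≤ t - s + 1 → consecKeys s t a b → Seg L a b

inductive LLEdge (L : ℕ) : ℤ → ℤ → Prop where
  | init (i : ℤ) : 1 ≤ i → i ≤ L → LLEdge L i (i - 1)
  | key (s t i j : ℤ) : Seg L s t → 2 ≤ t - s + 1 → i ∈ keySet s t → j ∈ keySet s t →
      j < i → LLEdge L i j
  | prev (s t a b j : ℤ) : Seg L s t → 2 ≤ t - s + 1 → consecKeys s t a b →
      a < j → j ≤ b → LLEdge L j a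

/-!
Let `segmentEdges s t` be the connections made inside the segment `[s, t]` by the recursion, and
`m = t - s`, `δ = ⌊√(m + 1)⌋`. The segment has at most `δ + 3` keys, hence at most `(δ + 3)² / 2`
key connections; it has at most `m` connections to a preceding key; and its children are the
gaps between consecutive keys, of width at most `δ` and total width at most `m`. By induction on
the recursion, `#segmentEdges s t ≤ 1.5 m · budget m` with
`budget m = log₂ log₂ (m + 1) + 200 - 20 / log₂ (m + 1)`: passing from `m` to `δ` lowers
`log₂ log₂` by almost exactly `1`, which pays for the `m / 2 + m` linear connections, while the
correction term gains about `10.5 m / log₂ m`, which pays for the remaining `O(√m)`. Segments with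
`m ≤ 255` are covered by the trivial bound `m²`, and the `L` initial connections `i → i - 1` are
absorbed in `C L`.
-/

open Finset

section KeySet

variable {s t b x : ℤ}

lemma le_of_mem_keySet (hx : x ∈ keySet s t) : s ≤ x := by
  rcases mem_insert.1 hx with rfl | hx
  · rfl
  · exact (mem_filter.1 hx).2

lemma le_of_mem_keySet_of_ne (hx : x ∈ keySet s t) (hxs : x ≠ s) : x ≤ t := by
  obtain ⟨k, -, rfl⟩ := mem_image.1 (mem_filter.1 ((mem_insert.1 hx).resolve_left hxs)).1
  have : 0 ≤ (k : ℤ) * (Nat.sqrt (t - s + 1).toNat : ℤ) := by positivity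
  omega

lemma sub_sqrt_mem_keySet (hb : b ∈ keySet s t) (hbs : b ≠ s)
    (h : s ≤ b - Nat.sqrt (t - s + 1).toNat) : b - Nat.sqrt (t - s + 1).toNat ∈ keySet s t := by
  obtain ⟨hb, -⟩ := mem_filter.1 ((mem_insert.1 hb).resolve_left hbs)
  obtain ⟨k, -, rfl⟩ := mem_image.1 hb
  set δ := Nat.sqrt (t - s + 1).toNat
  have hδ : 1 ≤ δ := Nat.sqrt_pos.2 (by have : 0 ≤ (k : ℤ) * δ := (by positivity); omega)
  have hk : (k + 1 : ℤ) ≤ (k + 1 : ℤ) * δ :=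
    le_mul_of_one_le_right (by positivity) (by exact_mod_cast hδ)
  refine mem_insert_of_mem (mem_filter.2 ⟨mem_image.2 ⟨k + 1, mem_range.2 ?_, ?_⟩, h⟩)
  · have : ((k : ℤ) + 1) * δ ≤ t - s := by linarith
    omega
  · push_cast; ring

lemma card_keySet_le (s t : ℤ) : #(keySet s t) ≤ Nat.sqrt (t - s + 1).toNat + 3 := by
  set n := (t - s + 1).toNat
  set δ := Nat.sqrt n
  have hsub : keySet s t ⊆ insert s ((range (δ + 2)).image fun k : ℕ => t - k * δ) := by
    refine insert_subset_insert _ fun x hx => ?_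
    obtain ⟨hx, hsx⟩ := mem_filter.1 hx
    obtain ⟨k, -, rfl⟩ := mem_image.1 hx
    refine mem_image.2 ⟨k, mem_range.2 ?_, rfl⟩
    change s ≤ t - k * δ at hsx
    have hn : (n : ℤ) < (δ + 1) * (δ + 1) := by exact_mod_cast Nat.lt_succ_sqrt n
    have hkδ : (k * δ : ℤ) ≤ n - 1 := by omega
    by_contra! hk'
    have : ((δ + 2) * δ : ℤ) ≤ k * δ := by gcongr; exact_mod_cast hk'
    nlinarith
  calc #(keySet s t) ≤ #((range (δ + 2)).image fun k : ℕ => t - k * δ) + 1 :=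
        (card_le_card hsub).trans (card_insert_le _ _)
    _ ≤ δ + 3 := by grw [card_image_le, card_range]

end KeySet

namespace consecKeys

variable {s t a b a' b' x : ℤ}

lemma bounds (h : consecKeys s t a b) : s ≤ a ∧ a < b ∧ b ≤ t := by
  obtain ⟨ha, hb, hab, -⟩ := h
  have := le_of_mem_keySet ha
  exact ⟨this, hab, le_of_mem_keySet_of_ne hb (by omega)⟩

lemma sub_le_sqrt (h : consecKeys s t a b) : b - a ≤ Nat.sqrt (t - s + 1).toNat := by
  obtain ⟨ha, hb, hab, hnone⟩ := h
  have hs := le_of_mem_keySet ha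
  have hbt := le_of_mem_keySet_of_ne hb (by omega)
  have hδ : 0 < Nat.sqrt (t - s + 1).toNat := Nat.sqrt_pos.2 (by omega)
  by_contra! hgap
  have hmem := sub_sqrt_mem_keySet hb (by omega) (by omega)
  exact hnone _ hmem ⟨by omega, by omega⟩

lemma sub_lt (h : consecKeys s t a b) (h3 : 3 ≤ t - s + 1) : b - a < t - s := by
  have hgap := h.sub_le_sqrt
  have hsqrt : Nat.sqrt (t - s + 1).toNat < (t - s + 1).toNat - 1 := by
    rw [Nat.sqrt_lt']
    set n := (t - s + 1).toNat
    have : 3 ≤ n := by omega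
    zify [show 1 ≤ n by omega]
    nlinarith
  omega

lemma eq_of_mem_Ioc (h : consecKeys s t a b) (h' : consecKeys s t a' b')
    (hx : x ∈ Ioc a b) (hx' : x ∈ Ioc a' b') : a = a' ∧ b = b' := by
  obtain ⟨ha, hb, -, hnone⟩ := h
  obtain ⟨ha', hb', -, hnone'⟩ := h'
  rw [mem_Ioc] at hx hx'
  have haa' : a = a' := by
    by_contra hne
    rcases Ne.lt_or_gt hne with hlt | hlt
    · exact hnone _ ha' ⟨hlt, by omega⟩
    · exact hnone' _ ha ⟨hlt, by omega⟩
  subst haa'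
  refine ⟨rfl, ?_⟩
  by_contra hne
  rcases Ne.lt_or_gt hne with hlt | hlt
  · exact hnone' _ hb ⟨by omega, hlt⟩
  · exact hnone _ hb' ⟨by omega, hlt⟩

end consecKeys

section Budget

open Real

lemma two_thirds_lt_log_two : 2 / 3 < log 2 := by
  have := log_two_gt_d9
  linarith

lemma logb_two_le_three_mul_sqrt {y : ℝ} (hy : 0 < y) : logb 2 y ≤ 3 * √y := by
  have hlog : log y = 2 * log √y := by rw [log_sqrt hy.le]; ring
  have hsqrt : log √y ≤ √y - 1 := log_le_sub_one_of_pos (sqrt_pos.2 hy)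
  have h2 := two_thirds_lt_log_two
  rw [logb, div_le_iff₀ (log_pos one_lt_two)]
  nlinarith [sqrt_nonneg y]

lemma logb_two_half_add_one_le {ℓ : ℝ} (hℓ : 0 < ℓ) :
    logb 2 (ℓ / 2 + 1) ≤ logb 2 ℓ - 1 + 3 / ℓ := by
  have hsplit : ℓ / 2 + 1 = ℓ / 2 * (1 + 2 / ℓ) := by field_simp
  have hlog : log (1 + 2 / ℓ) ≤ 2 / ℓ := by
    have := log_le_sub_one_of_pos (show 0 < 1 + 2 / ℓ by positivity)
    linarith
  have hlogb : logb 2 (1 + 2 / ℓ) ≤ 3 / ℓ := by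
    have h2 := two_thirds_lt_log_two
    rw [logb, div_le_iff₀ (log_pos one_lt_two)]
    have : 2 / ℓ ≤ 3 / ℓ * log 2 := by
      rw [div_mul_eq_mul_div, div_le_div_iff_of_pos_right hℓ]; linarith
    linarith
  rw [hsplit, logb_mul (by positivity) (by positivity), logb_div hℓ.ne' two_ne_zero,
    logb_self_eq_one one_lt_two]
  linarith

lemma logb_two_add_one_le_of_le_sqrt {x y : ℝ} (hx : 0 ≤ x) (hy : 1 ≤ y) (hxy : x ≤ √y) :
    logb 2 (x + 1) ≤ logb 2 y / 2 + 1 := by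
  have hsqrt : 1 ≤ √y := one_le_sqrt.2 hy
  have hle : logb 2 (x + 1) ≤ logb 2 (2 * √y) :=
    logb_le_logb_of_le one_lt_two (by positivity) (by linarith)
  have hhalf : logb 2 √y = logb 2 y / 2 := by rw [logb, logb, log_sqrt (by linarith)]; ring
  rw [logb_mul two_ne_zero (by positivity), logb_self_eq_one one_lt_two, hhalf] at hle
  linarith

noncomputable def budget (m : ℕ) : ℝ :=
  logb 2 (logb 2 (m + 1)) + 200 - 20 / logb 2 (m + 1)

lemma one_le_logb_two_add_one {m : ℕ} (hm : 1 ≤ m) : 1 ≤ logb 2 ((m : ℝ) + 1) := by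
  rw [le_logb_iff_rpow_le one_lt_two (by positivity), rpow_one]
  exact_mod_cast Nat.succ_le_succ hm

lemma eight_le_logb_two_add_one {m : ℕ} (hm : 255 ≤ m) : 8 ≤ logb 2 ((m : ℝ) + 1) := by
  rw [le_logb_iff_rpow_le one_lt_two (by positivity), show (2 : ℝ) ^ (8 : ℝ) = 256 by norm_num]
  exact_mod_cast Nat.succ_le_succ hm

lemma budget_mono {m m' : ℕ} (hm : 1 ≤ m) (h : m ≤ m') : budget m ≤ budget m' := by
  have hℓ := one_le_logb_two_add_one hm
  have hℓ_le : logb 2 ((m : ℝ) + 1) ≤ logb 2 ((m' : ℝ) + 1) :=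
    logb_le_logb_of_le one_lt_two (by positivity) (by gcongr)
  have hloglog := logb_le_logb_of_le one_lt_two (by linarith) hℓ_le
  have hrecip : 20 / logb 2 ((m' : ℝ) + 1) ≤ 20 / logb 2 ((m : ℝ) + 1) :=
    div_le_div_of_nonneg_left (by norm_num) (by linarith) hℓ_le
  unfold budget
  linarith

lemma one_add_le_budget_sub_budget_sqrt {m : ℕ} (hm : 255 ≤ m) :
    1 + 7 / logb 2 ((m : ℝ) + 1) ≤ budget m - budget (Nat.sqrt (m + 1)) := by
  set ℓ := logb 2 ((m : ℝ) + 1)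
  set D := Nat.sqrt (m + 1)
  have hℓ := eight_le_logb_two_add_one hm
  have hℓD_pos : 0 < logb 2 ((D : ℝ) + 1) :=
    one_le_logb_two_add_one (Nat.sqrt_pos.2 (Nat.succ_pos m)) |>.trans_lt' one_pos
  have hℓD : logb 2 ((D : ℝ) + 1) ≤ ℓ / 2 + 1 := by
    refine logb_two_add_one_le_of_le_sqrt (by positivity) (by linarith [m.cast_nonneg (α := ℝ)])
      ?_
    exact_mod_cast Real.nat_sqrt_le_real_sqrt (a := m + 1)
  have hloglog : logb 2 (logb 2 ((D : ℝ) + 1)) ≤ logb 2 ℓ - 1 + 3 / ℓ :=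
    (logb_le_logb_of_le one_lt_two hℓD_pos hℓD).trans (logb_two_half_add_one_le (by linarith))
  have hrecip : 30 / ℓ ≤ 20 / logb 2 ((D : ℝ) + 1) := by
    calc 30 / ℓ ≤ 20 / (ℓ / 2 + 1) := by
          rw [div_le_div_iff₀ (by linarith) (by linarith)]; linarith
      _ ≤ 20 / logb 2 ((D : ℝ) + 1) := div_le_div_of_nonneg_left (by norm_num) hℓD_pos hℓD
  have h7 : 7 / ℓ = 30 / ℓ - 3 / ℓ - 20 / ℓ := by ring
  unfold budget
  linarith

lemma budget_step {m : ℕ} (hm : 255 ≤ m) :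
    ((Nat.sqrt (m + 1) : ℝ) + 3) ^ 2 / 2 + m + 1.5 * m * budget (Nat.sqrt (m + 1)) ≤
      1.5 * m * budget m := by
  set ℓ := logb 2 ((m : ℝ) + 1)
  set D := Nat.sqrt (m + 1)
  set R := √((m : ℝ) + 1)
  have hdiff := one_add_le_budget_sub_budget_sqrt hm
  have hℓ := eight_le_logb_two_add_one hm
  have hm' : (255 : ℝ) ≤ m := by exact_mod_cast hm
  have hRsq : R ^ 2 = m + 1 := sq_sqrt (by positivity)
  have hR : 16 ≤ R := by nlinarith [sqrt_nonneg ((m : ℝ) + 1)]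
  have hℓR : ℓ ≤ 3 * R := logb_two_le_three_mul_sqrt (by positivity)
  have hDR : (D : ℝ) ≤ R := by simpa using Real.nat_sqrt_le_real_sqrt (a := m + 1)
  -- the sublinear cost `3√m` of the key edges is paid for by the `-20 / log₂(m+1)` term of `budget`
  have hkey : 3 * R + 5 ≤ 10.5 * m / ℓ := by
    rw [le_div_iff₀ (by linarith)]
    nlinarith
  calc ((D : ℝ) + 3) ^ 2 / 2 + m + 1.5 * m * budget D
      ≤ 1.5 * m + (3 * R + 5) + 1.5 * m * budget D := by nlinarith [m.cast_nonneg (α := ℝ)]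
    _ ≤ 1.5 * m * (1 + 7 / ℓ) + 1.5 * m * budget D := by
        have : 1.5 * (m : ℝ) * (1 + 7 / ℓ) = 1.5 * m + 10.5 * m / ℓ := by ring
        linarith
    _ ≤ 1.5 * m * (budget m - budget D) + 1.5 * m * budget D := by gcongr
    _ = 1.5 * m * budget m := by ring

lemma le_budget {m : ℕ} (hm : 1 ≤ m) : 180 ≤ budget m := by
  have hℓ := one_le_logb_two_add_one hm
  have hloglog : 0 ≤ logb 2 (logb 2 ((m : ℝ) + 1)) := logb_nonneg one_lt_two hℓ
  have hrecip : 20 / logb 2 ((m : ℝ) + 1) ≤ 20 := div_le_self (by norm_num) hℓ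
  unfold budget
  linarith

lemma sq_le_budget {m : ℕ} (hm : m ≤ 255) : (m : ℝ) ^ 2 ≤ 1.5 * m * budget m := by
  rcases Nat.eq_zero_or_pos m with rfl | hm1
  · simp
  have hbudget := le_budget hm1
  have hm' : (m : ℝ) ≤ 255 := by exact_mod_cast hm
  nlinarith [m.cast_nonneg (α := ℝ)]

lemma budget_le_logb_logb {L : ℕ} (hL : 2 ≤ L) : budget L ≤ logb 2 (logb 2 L) + 201 := by
  have hL' : (2 : ℝ) ≤ L := by exact_mod_cast hL
  have hlogL : 1 ≤ logb 2 (L : ℝ) := by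
    rw [le_logb_iff_rpow_le one_lt_two (by linarith), rpow_one]; exact hL'
  have hℓ : logb 2 ((L : ℝ) + 1) ≤ 2 * logb 2 L := by
    rw [show 2 * logb 2 (L : ℝ) = logb 2 ((L : ℝ) ^ 2) by rw [logb_pow]; norm_num]
    exact logb_le_logb_of_le one_lt_two (by positivity) (by nlinarith)
  have hloglog : logb 2 (logb 2 ((L : ℝ) + 1)) ≤ logb 2 (logb 2 L) + 1 := by
    have := logb_le_logb_of_le one_lt_two
      (one_le_logb_two_add_one (by omega) |>.trans_lt' one_pos) hℓ
    rw [logb_mul two_ne_zero (by positivity), logb_self_eq_one one_lt_two] at this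
    linarith
  have hrecip : 0 ≤ 20 / logb 2 ((L : ℝ) + 1) :=
    div_nonneg (by norm_num) (logb_nonneg one_lt_two (by linarith))
  unfold budget
  linarith

end Budget

section Edges

variable {s t a b : ℤ}

def consecPairs (s t : ℤ) : Finset (ℤ × ℤ) :=
  {p ∈ keySet s t ×ˢ keySet s t | p.1 < p.2 ∧ ∀ c ∈ keySet s t, ¬(p.1 < c ∧ c < p.2)}

lemma mem_consecPairs {p : ℤ × ℤ} : p ∈ consecPairs s t ↔ consecKeys s t p.1 p.2 := by
  rw [consecPairs, mem_filter, mem_product, consecKeys, and_assoc]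

def keyEdges (s t : ℤ) : Finset (ℤ × ℤ) :=
  {p ∈ keySet s t ×ˢ keySet s t | p.2 < p.1}

noncomputable def prevEdges (s t : ℤ) : Finset (ℤ × ℤ) :=
  (consecPairs s t).biUnion fun p => (Ioc p.1 p.2).image (·, p.1)

/-- The `key` and `prev` connections of `[s, t]` and of all segments below it in the recursion
(`Seg`), as a finset. -/
noncomputable def segmentEdges (s t : ℤ) : Finset (ℤ × ℤ) :=
  keyEdges s t ∪ prevEdges s t ∪
    if 3 ≤ t - s + 1 then
      (consecPairs s t).attach.biUnion fun p => segmentEdges p.1.1 p.1.2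
    else ∅
termination_by (t - s).toNat
decreasing_by
  have := (mem_consecPairs.1 p.2).sub_lt ‹_›
  omega

lemma consecKeys.segmentEdges_subset (h : consecKeys s t a b) (h3 : 3 ≤ t - s + 1) :
    segmentEdges a b ⊆ segmentEdges s t := by
  intro e he
  rw [segmentEdges, if_pos h3]
  exact mem_union_right _ (mem_biUnion.2 ⟨⟨(a, b), mem_consecPairs.2 h⟩, mem_attach _ _, he⟩)

lemma Seg.segmentEdges_subset {L : ℕ} (h : Seg L s t) :
    segmentEdges s t ⊆ segmentEdges 0 L := by
  induction h with
  | root => exact subset_rfl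
  | child s t a b _ h3 hc ih => exact (hc.segmentEdges_subset h3).trans ih

noncomputable def initEdges (L : ℕ) : Finset (ℤ × ℤ) :=
  (Icc 1 (L : ℤ)).image fun i => (i, i - 1)

lemma LLEdge.mem_segmentEdges_union {L : ℕ} {i j : ℤ} (h : LLEdge L i j) :
    (i, j) ∈ segmentEdges 0 L ∪ initEdges L := by
  induction h with
  | init i h1 h2 => exact mem_union_right _ (mem_image.2 ⟨i, mem_Icc.2 ⟨h1, h2⟩, rfl⟩)
  | key s t i j hseg _ hi hj hij =>
    refine mem_union_left _ (hseg.segmentEdges_subset ?_)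
    rw [segmentEdges]
    exact mem_union_left _ (mem_union_left _ (mem_filter.2 ⟨mem_product.2 ⟨hi, hj⟩, hij⟩))
  | prev s t a b j hseg _ hc h1 h2 =>
    refine mem_union_left _ (hseg.segmentEdges_subset ?_)
    rw [segmentEdges]
    exact mem_union_left _ (mem_union_right _ (mem_biUnion.2
      ⟨(a, b), mem_consecPairs.2 hc, mem_image.2 ⟨j, mem_Ioc.2 ⟨h1, h2⟩, rfl⟩⟩))

lemma ncard_LLEdge_le (L : ℕ) :
    {p : ℤ × ℤ | LLEdge L p.1 p.2}.ncard ≤ #(segmentEdges 0 L) + L := by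
  have hsub : {p : ℤ × ℤ | LLEdge L p.1 p.2} ⊆ ↑(segmentEdges 0 L ∪ initEdges L) :=
    fun _ hp => LLEdge.mem_segmentEdges_union hp
  have hinit : #(initEdges L) ≤ L := card_image_le.trans (by simp)
  calc {p : ℤ × ℤ | LLEdge L p.1 p.2}.ncard ≤ #(segmentEdges 0 L ∪ initEdges L) := by
        rw [← Set.ncard_coe_finset]; exact Set.ncard_le_ncard hsub
    _ ≤ #(segmentEdges 0 L) + L := (card_union_le _ _).trans (by omega)

end Edges

section Counting

variable {s t : ℤ}

lemma segmentEdges_subset_Ioc_Ico (s t : ℤ) : segmentEdges s t ⊆ Ioc s t ×ˢ Ico s t := by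
  induction s, t using segmentEdges.induct with
  | case1 s t ih =>
    intro e he
    rw [segmentEdges, mem_union, mem_union] at he
    rw [mem_product, mem_Ioc, mem_Ico]
    rcases he with (hkey | hprev) | hchild
    · obtain ⟨hmem, hlt⟩ := mem_filter.1 hkey
      obtain ⟨h1, h2⟩ := mem_product.1 hmem
      have := le_of_mem_keySet h2
      have := le_of_mem_keySet_of_ne h1 (by omega)
      omega
    · obtain ⟨p, hp, he⟩ := mem_biUnion.1 hprev
      obtain ⟨x, hx, rfl⟩ := mem_image.1 he
      have := (mem_consecPairs.1 hp).bounds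
      have := mem_Ioc.1 hx
      omega
    · split_ifs at hchild with h3
      · obtain ⟨p, -, he⟩ := mem_biUnion.1 hchild
        have := (mem_consecPairs.1 p.2).bounds
        have := mem_product.1 (ih h3 p he)
        rw [mem_Ioc, mem_Ico] at this
        omega
      · exact absurd hchild (notMem_empty e)

lemma card_segmentEdges_le_sq (s t : ℤ) : #(segmentEdges s t) ≤ (t - s).toNat ^ 2 := by
  grw [card_le_card (segmentEdges_subset_Ioc_Ico s t), card_product, Int.card_Ioc, Int.card_Ico,
    sq]

lemma card_keyEdges (s t : ℤ) : #(keyEdges s t) = (#(keySet s t)).choose 2 := by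
  rw [← card_product_filter_lt]
  exact card_equiv (Equiv.prodComm ℤ ℤ) (by simp [keyEdges, and_comm])

lemma card_keyEdges_le (s t : ℤ) :
    (#(keyEdges s t) : ℝ) ≤ ((Nat.sqrt (t - s + 1).toNat : ℝ) + 3) ^ 2 / 2 := by
  have hK : (#(keySet s t) : ℝ) ≤ Nat.sqrt (t - s + 1).toNat + 3 := by
    exact_mod_cast card_keySet_le s t
  rw [card_keyEdges, Nat.cast_choose_two]
  nlinarith [(#(keySet s t)).cast_nonneg (α := ℝ)]

lemma sum_sub_consecPairs_le (s t : ℤ) :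
    ∑ p ∈ consecPairs s t, (p.2 - p.1).toNat ≤ (t - s).toNat := by
  have hdisj : (consecPairs s t : Set (ℤ × ℤ)).PairwiseDisjoint fun p => Ioc p.1 p.2 := by
    intro p hp q hq hne
    refine disjoint_left.2 fun x hxp hxq => hne ?_
    have := (mem_consecPairs.1 hp).eq_of_mem_Ioc (mem_consecPairs.1 hq) hxp hxq
    exact Prod.ext this.1 this.2
  have hsub : (consecPairs s t).biUnion (fun p => Ioc p.1 p.2) ⊆ Ioc s t := by
    intro x hx
    obtain ⟨p, hp, hx⟩ := mem_biUnion.1 hx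
    have := (mem_consecPairs.1 hp).bounds
    rw [mem_Ioc] at hx ⊢
    omega
  calc ∑ p ∈ consecPairs s t, (p.2 - p.1).toNat = ∑ p ∈ consecPairs s t, #(Ioc p.1 p.2) := by
        simp only [Int.card_Ioc]
    _ = #((consecPairs s t).biUnion fun p => Ioc p.1 p.2) := (card_biUnion hdisj).symm
    _ ≤ (t - s).toNat := (card_le_card hsub).trans (Int.card_Ioc s t).le

lemma card_prevEdges_le (s t : ℤ) : #(prevEdges s t) ≤ (t - s).toNat :=
  calc #(prevEdges s t) ≤ ∑ p ∈ consecPairs s t, #((Ioc p.1 p.2).image (·, p.1)) :=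
        card_biUnion_le
    _ ≤ ∑ p ∈ consecPairs s t, (p.2 - p.1).toNat :=
        sum_le_sum fun _ _ => card_image_le.trans (Int.card_Ioc _ _).le
    _ ≤ (t - s).toNat := sum_sub_consecPairs_le s t

lemma card_segmentEdges_le_add (h3 : 3 ≤ t - s + 1) :
    #(segmentEdges s t) ≤ #(keyEdges s t) + #(prevEdges s t) +
      ∑ p ∈ consecPairs s t, #(segmentEdges p.1 p.2) := by
  rw [segmentEdges, if_pos h3]
  grw [card_union_le, card_union_le, card_biUnion_le,
    sum_attach (consecPairs s t) fun p => #(segmentEdges p.1 p.2)]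

lemma sum_card_segmentEdges_consecPairs_le (hst : s ≤ t)
    (ih : ∀ p ∈ consecPairs s t,
      (#(segmentEdges p.1 p.2) : ℝ) ≤ 1.5 * (p.2 - p.1).toNat * budget (p.2 - p.1).toNat) :
    ∑ p ∈ consecPairs s t, (#(segmentEdges p.1 p.2) : ℝ) ≤
      1.5 * (t - s).toNat * budget (Nat.sqrt (t - s + 1).toNat) := by
  set δ := Nat.sqrt (t - s + 1).toNat
  have hwidth : ∑ p ∈ consecPairs s t, ((p.2 - p.1).toNat : ℝ) ≤ (t - s).toNat := by
    exact_mod_cast sum_sub_consecPairs_le s t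
  have hbudget : 0 ≤ budget δ := (le_budget (Nat.sqrt_pos.2 (by omega))).trans' (by norm_num)
  calc ∑ p ∈ consecPairs s t, (#(segmentEdges p.1 p.2) : ℝ)
      ≤ ∑ p ∈ consecPairs s t, 1.5 * budget δ * (p.2 - p.1).toNat := by
        refine sum_le_sum fun p hp => ?_
        have hc := mem_consecPairs.1 hp
        have hw : (p.2 - p.1).toNat ≤ δ := by have := hc.sub_le_sqrt; omega
        have hw1 : 1 ≤ (p.2 - p.1).toNat := by have := hc.bounds; omega
        calc _ ≤ 1.5 * (p.2 - p.1).toNat * budget (p.2 - p.1).toNat := ih p hp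
          _ ≤ 1.5 * (p.2 - p.1).toNat * budget δ := by gcongr; exact budget_mono hw1 hw
          _ = _ := by ring
    _ = 1.5 * budget δ * ∑ p ∈ consecPairs s t, ((p.2 - p.1).toNat : ℝ) := by rw [mul_sum]
    _ ≤ 1.5 * budget δ * (t - s).toNat := by gcongr
    _ = 1.5 * (t - s).toNat * budget δ := by ring

lemma card_segmentEdges_le (s t : ℤ) :
    (#(segmentEdges s t) : ℝ) ≤ 1.5 * (t - s).toNat * budget (t - s).toNat := by
  induction s, t using segmentEdges.induct with
  | case1 s t ih =>
    rcases le_or_gt (t - s).toNat 255 with hsmall | hlarge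
    · calc (#(segmentEdges s t) : ℝ) ≤ ((t - s).toNat : ℝ) ^ 2 := by
            exact_mod_cast card_segmentEdges_le_sq s t
        _ ≤ _ := sq_le_budget hsmall
    have h3 : 3 ≤ t - s + 1 := by omega
    have hn : (t - s + 1).toNat = (t - s).toNat + 1 := by omega
    have hkey := card_keyEdges_le s t
    have hprev : (#(prevEdges s t) : ℝ) ≤ (t - s).toNat := by exact_mod_cast card_prevEdges_le s t
    have hchildren := sum_card_segmentEdges_consecPairs_le (by omega) fun p hp => ih h3 ⟨p, hp⟩
    rw [hn] at hkey hchildren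
    calc (#(segmentEdges s t) : ℝ)
        ≤ #(keyEdges s t) + #(prevEdges s t) +
            ∑ p ∈ consecPairs s t, (#(segmentEdges p.1 p.2) : ℝ) := by
          exact_mod_cast card_segmentEdges_le_add h3
      _ ≤ _ := by linarith [budget_step hlarge.le]

end Counting

/-- The total number of connections in a LogLog-DenseNet of depth `L` is at most
`1.5·L·log₂ log₂ L + o(L log log L)`: there is a constant `C` with
`C(L) ≤ 1.5·L·log₂ log₂ L + C·L` for all `L ≥ 4`. -/
theorem stmt13 : ∃ C : ℝ, ∀ L : ℕ, 4 ≤ L →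
    (Set.ncard {p : ℤ × ℤ | LLEdge L p.1 p.2} : ℝ) ≤
      1.5 * L * Real.logb 2 (Real.logb 2 L) + C * L := by
  refine ⟨1.5 * 201 + 1, fun L hL => ?_⟩
  have hcount : (Set.ncard {p : ℤ × ℤ | LLEdge L p.1 p.2} : ℝ) ≤ #(segmentEdges 0 L) + L := by
    exact_mod_cast ncard_LLEdge_le L
  have hsegment : (#(segmentEdges 0 L) : ℝ) ≤ 1.5 * L * budget L := by
    simpa using card_segmentEdges_le 0 L
  have hbudget : 1.5 * L * budget L ≤ 1.5 * L * (Real.logb 2 (Real.logb 2 L) + 201) := by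
    gcongr
    exact budget_le_logb_logb (by omega)
  linarith
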